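/- arXiv:2007.00151 — 2 statements merged into one kernel-verified Lean document; each statement's English description precedes it below -/
import Mathlib

section
/- For data in general position, the number of subsets S of an n-point set X ⊂ ℝ^p that are linearly separable (by a hyperplane through the origin, homogeneous separation) from their complement equals C(n,p) = 2 Σ_{k=0}^{p-1} binom(n-1, k) (Cover's function counting theorem / Schläfli formula). Consequently, the number of non-separable dichotomies is 2^n - C(n,p) = 2 Σ_{k=0}^{n-p-1} binom(n-1, k). -/
/-!
Cover's recursion. Append a point `u` to a family `y'`. A dichotomy `T` of `y'` separated by `f`
extends to `T` or to `T ∪ {u}` according to the sign of `f u`, and both extensions are separable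
iff some separating `f` has `f u = 0`: perturb such an `f` along a functional equal to `1` at `u`,
and conversely take the positive combination of the two separating functionals that vanishes
at `u`. The functionals vanishing at `u` are those of `V ⧸ ℝ ∙ u`, so the number of separable
dichotomies of `y' ∪ {u}` is that of `y'` plus that of the image of `y'` in `V ⧸ ℝ ∙ u`. Both
families are again in general position, the quotient in one dimension less, and Pascal's rule
closes the induction. The count of non-separable dichotomies is binomial symmetry.
-/

open Finset Module Filter Topology

section Separation

variable {ι V : Type*} [AddCommGroup V] [Module ℝ V] {f g : Dual ℝ V} {y : ι → V}
  {S : Finset ι}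

def Separates (f : Dual ℝ V) (y : ι → V) (S : Finset ι) : Prop :=
  (∀ i ∈ S, 0 < f (y i)) ∧ ∀ i ∉ S, f (y i) < 0

def LinearlySeparable (y : ι → V) (S : Finset ι) : Prop :=
  ∃ f : Dual ℝ V, Separates f y S

theorem Separates.eventually_add_smul [Finite ι] (h : Separates f y S) (g : Dual ℝ V) :
    ∀ᶠ t in 𝓝 (0 : ℝ), Separates (f + t • g) y S := by
  have hlim : ∀ i, Tendsto (fun t : ℝ => (f + t • g) (y i)) (𝓝 0) (𝓝 (f (y i))) := fun i => by
    simpa using ((tendsto_id (x := 𝓝 (0 : ℝ))).mul_const (g (y i))).const_add (f (y i))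
  refine ((eventually_all_finset S).2 fun i hi => (hlim i).eventually_const_lt (h.1 i hi)).and
    (eventually_all.2 fun i => ?_)
  by_cases hi : i ∈ S
  · exact .of_forall fun _ hi' => absurd hi hi'
  · exact ((hlim i).eventually_lt_const (h.2 i hi)).mono fun _ ht _ => ht

theorem Separates.exists_pos_add_smul [Finite ι] (h : Separates f y S) (g : Dual ℝ V) :
    ∃ t : ℝ, 0 < t ∧ Separates (f + t • g) y S := by
  obtain ⟨t, ht, ht0⟩ := (((h.eventually_add_smul g).filter_mono nhdsWithin_le_nhds).and
    (self_mem_nhdsWithin (s := Set.Ioi 0))).exists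
  exact ⟨t, ht0, ht⟩

theorem Separates.exists_neg_and_exists_pos [Finite ι] {u : V} (h : Separates f y S)
    (hu : u ≠ 0) (hfu : f u = 0) :
    (∃ g : Dual ℝ V, Separates g y S ∧ g u < 0) ∧ ∃ g : Dual ℝ V, Separates g y S ∧ 0 < g u := by
  obtain ⟨φ, hφ⟩ := Projective.exists_dual_eq_one ℝ hu
  obtain ⟨s, hs, hsep⟩ := h.exists_pos_add_smul (-φ)
  obtain ⟨t, ht, htep⟩ := h.exists_pos_add_smul φ
  exact ⟨⟨_, hsep, by simpa [hfu, hφ]⟩, ⟨_, htep, by simpa [hfu, hφ]⟩⟩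

theorem Separates.smul_add_smul (hf : Separates f y S) (hg : Separates g y S) {a b : ℝ}
    (ha : 0 < a) (hb : 0 < b) : Separates (a • f + b • g) y S := by
  refine ⟨fun i hi => ?_, fun i hi => ?_⟩ <;>
    simp only [LinearMap.add_apply, LinearMap.smul_apply, smul_eq_mul]
  · have := hf.1 i hi
    have := hg.1 i hi
    positivity
  · nlinarith [hf.2 i hi, hg.2 i hi]

theorem linearlySeparable_mkQ_iff (W : Submodule ℝ V) (y : ι → V) (S : Finset ι) :
    LinearlySeparable (W.mkQ ∘ y) S ↔ ∃ f : Dual ℝ V, W ≤ LinearMap.ker f ∧ Separates f y S := by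
  constructor
  · rintro ⟨g, hg⟩
    exact ⟨g ∘ₗ W.mkQ, fun v hv => by simp [(Submodule.Quotient.mk_eq_zero W).2 hv], hg⟩
  · rintro ⟨f, hW, hf⟩
    exact ⟨W.liftQ f hW, hf⟩

theorem linearlySeparable_pi_iff {κ : Type*} [Fintype κ] [DecidableEq κ] (x : ι → κ → ℝ)
    (S : Finset ι) :
    LinearlySeparable x S ↔
      ∃ w : κ → ℝ, (∀ i ∈ S, 0 < ∑ j, w j * x i j) ∧ ∀ i ∉ S, ∑ j, w j * x i j < 0 := by
  simp [LinearlySeparable, (dotProductEquiv ℝ κ).surjective.exists, Separates, dotProduct]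

end Separation

section Snoc

variable {V : Type*} [AddCommGroup V] [Module ℝ V] {n : ℕ} {y : Fin (n + 1) → V}
  {T : Finset (Fin n)} {f : Dual ℝ V}

theorem separates_image_castSucc_iff :
    Separates f y (T.image Fin.castSucc) ↔
      Separates f (y ∘ Fin.castSucc) T ∧ f (y (Fin.last n)) < 0 := by
  simp [Separates, Fin.forall_fin_succ', Fin.castSucc_ne_last, and_assoc]

theorem separates_insert_last_iff :
    Separates f y (insert (Fin.last n) (T.image Fin.castSucc)) ↔
      Separates f (y ∘ Fin.castSucc) T ∧ 0 < f (y (Fin.last n)) := by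
  simp [Separates, Fin.forall_fin_succ', Fin.castSucc_ne_last, and_assoc, and_comm]

theorem linearlySeparable_castSucc_iff (hu : y (Fin.last n) ≠ 0) :
    LinearlySeparable (y ∘ Fin.castSucc) T ↔
      LinearlySeparable y (T.image Fin.castSucc) ∨
        LinearlySeparable y (insert (Fin.last n) (T.image Fin.castSucc)) := by
  simp only [LinearlySeparable, separates_image_castSucc_iff, separates_insert_last_iff]
  constructor
  · rintro ⟨f, hf⟩
    rcases lt_trichotomy (f (y (Fin.last n))) 0 with hneg | hzero | hpos
    · exact .inl ⟨f, hf, hneg⟩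
    · exact .inr (hf.exists_neg_and_exists_pos hu hzero).2
    · exact .inr ⟨f, hf, hpos⟩
  · rintro (⟨f, hf, -⟩ | ⟨f, hf, -⟩) <;> exact ⟨f, hf⟩

theorem linearlySeparable_mkQ_castSucc_iff (hu : y (Fin.last n) ≠ 0) :
    LinearlySeparable ((ℝ ∙ y (Fin.last n)).mkQ ∘ y ∘ Fin.castSucc) T ↔
      LinearlySeparable y (T.image Fin.castSucc) ∧
        LinearlySeparable y (insert (Fin.last n) (T.image Fin.castSucc)) := by
  rw [linearlySeparable_mkQ_iff]
  simp only [Submodule.span_singleton_le_iff_mem, LinearMap.mem_ker, LinearlySeparable,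
    separates_image_castSucc_iff, separates_insert_last_iff]
  constructor
  · rintro ⟨f, hfu, hf⟩
    exact hf.exists_neg_and_exists_pos hu hfu
  · rintro ⟨⟨f, hf, hfu⟩, ⟨g, hg, hgu⟩⟩
    refine ⟨g (y (Fin.last n)) • f + (-f (y (Fin.last n))) • g, ?_,
      hf.smul_add_smul hg hgu (by linarith)⟩
    simp only [LinearMap.add_apply, LinearMap.smul_apply, smul_eq_mul]
    ring

end Snoc

theorem sum_finset_fin_castSucc {M : Type*} [AddCommMonoid M] {n : ℕ}
    (φ : Finset (Fin (n + 1)) → M) :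
    ∑ S, φ S = ∑ T : Finset (Fin n),
      (φ (T.image Fin.castSucc) + φ (insert (Fin.last n) (T.image Fin.castSucc))) := by
  rw [← powerset_univ, Fin.univ_castSuccEmb, cons_eq_insert, map_eq_image, Fin.coe_castSuccEmb,
    sum_powerset_insert (by simp), powerset_image, sum_image, sum_image, powerset_univ,
    ← sum_add_distrib]
  all_goals exact image_injOn_powerset_of_injOn (Fin.castSucc_injective n).injOn

open Classical in
theorem card_linearlySeparable_snoc {V : Type*} [AddCommGroup V] [Module ℝ V] {n : ℕ}
    (y : Fin (n + 1) → V) (hu : y (Fin.last n) ≠ 0) :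
    #{S | LinearlySeparable y S} = #{T | LinearlySeparable (y ∘ Fin.castSucc) T} +
      #{T | LinearlySeparable ((ℝ ∙ y (Fin.last n)).mkQ ∘ y ∘ Fin.castSucc) T} := by
  simp only [card_filter, sum_finset_fin_castSucc, ← sum_add_distrib]
  refine sum_congr rfl fun T _ => ?_
  rw [linearlySeparable_castSucc_iff hu, linearlySeparable_mkQ_castSucc_iff hu]
  split_ifs <;> tauto

theorem LinearIndepOn.mkQ_span_singleton {K ι V : Type*} [Field K] [AddCommGroup V]
    [Module K V] {y : ι → V} {s : Set ι} {a : ι} (h : LinearIndepOn K y (insert a s))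
    (ha : a ∉ s) : LinearIndepOn K ((K ∙ y a).mkQ ∘ y) s := by
  obtain ⟨hs, hya⟩ := (linearIndepOn_insert ha).1 h
  refine hs.map_injOn _ (LinearMap.injOn_of_disjoint_ker le_rfl ?_)
  rw [Submodule.ker_mkQ, Submodule.disjoint_span_singleton]
  exact fun hmem => absurd hmem hya

theorem finrank_quotient_span_singleton_add_one (K : Type*) {V : Type*} [Field K]
    [AddCommGroup V] [Module K V] [FiniteDimensional K V] {u : V} (hu : u ≠ 0) :
    finrank K (V ⧸ K ∙ u) + 1 = finrank K V := by
  rw [← finrank_span_singleton (K := K) hu, Submodule.finrank_quotient_add_finrank]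

section GeneralPosition

variable {ι V : Type*} [AddCommGroup V] [Module ℝ V]

def InGeneralPosition (y : ι → V) : Prop :=
  ∀ s : Finset ι, #s ≤ finrank ℝ V → LinearIndepOn ℝ y s

theorem InGeneralPosition.ne_zero {y : ι → V} (h : InGeneralPosition y)
    (hV : finrank ℝ V ≠ 0) (i : ι) : y i ≠ 0 :=
  (linearIndepOn_singleton_iff ℝ).1 <| by
    simpa using h {i} (by simpa using Nat.one_le_iff_ne_zero.2 hV)

theorem InGeneralPosition.comp {κ : Type*} {y : ι → V} (h : InGeneralPosition y) {e : κ → ι}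
    (he : Function.Injective e) : InGeneralPosition (y ∘ e) := fun s hs =>
  LinearIndepOn.comp_of_image (by simpa using h (s.map ⟨e, he⟩) (by simpa using hs)) he.injOn

theorem InGeneralPosition.mkQ_comp_castSucc [FiniteDimensional ℝ V] {n : ℕ}
    {y : Fin (n + 1) → V} (h : InGeneralPosition y) (hu : y (Fin.last n) ≠ 0) :
    InGeneralPosition ((ℝ ∙ y (Fin.last n)).mkQ ∘ y ∘ Fin.castSucc) := by
  intro s hs
  have hrank := finrank_quotient_span_singleton_add_one ℝ hu
  have hind := h (insert (Fin.last n) (s.map Fin.castSuccEmb)) (by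
    grw [card_insert_le, card_map]; omega)
  simp only [coe_insert, coe_map, Fin.coe_castSuccEmb] at hind
  exact (hind.mkQ_span_singleton (by simp)).comp_of_image (Fin.castSucc_injective n).injOn

end GeneralPosition

theorem sum_range_choose_succ (n q : ℕ) :
    ∑ k ∈ range (q + 1), (n + 1).choose k =
      ∑ k ∈ range (q + 1), n.choose k + ∑ k ∈ range q, n.choose k := by
  simp only [sum_range_succ' _ q, Nat.choose_succ_succ, sum_add_distrib, Nat.choose_zero_right]
  ring

section Counting

variable {V : Type*} [AddCommGroup V] [Module ℝ V]

open Classical in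
theorem card_linearlySeparable_of_finrank_eq_zero [FiniteDimensional ℝ V] {ι : Type*}
    [Fintype ι] [Nonempty ι] (hV : finrank ℝ V = 0) (y : ι → V) :
    #{S | LinearlySeparable y S} = 0 := by
  refine card_eq_zero.2 (filter_false_of_mem fun S _ ⟨f, hpos, hneg⟩ => ?_)
  obtain ⟨i⟩ := ‹Nonempty ι›
  have hyi : y i = 0 := (finrank_zero_iff_forall_zero (K := ℝ)).1 hV _
  by_cases hi : i ∈ S
  · simpa [hyi] using hpos i hi
  · simpa [hyi] using hneg i hi

open Classical in
theorem card_linearlySeparable_fin_zero (y : Fin 0 → V) : #{S | LinearlySeparable y S} = 1 := by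
  rw [filter_true_of_mem fun S _ => ⟨0, fun i => i.elim0, fun i => i.elim0⟩]
  simp

open Classical in
theorem card_linearlySeparable [FiniteDimensional ℝ V] (n : ℕ) (y : Fin (n + 1) → V)
    (hy : InGeneralPosition y) :
    #{S | LinearlySeparable y S} = 2 * ∑ k ∈ range (finrank ℝ V), n.choose k := by
  induction n generalizing V with
  | zero =>
    rcases eq_or_ne (finrank ℝ V) 0 with hV | hV
    · simp [hV, card_linearlySeparable_of_finrank_eq_zero]
    obtain ⟨q, hq⟩ := Nat.exists_eq_add_one_of_ne_zero hV
    rw [card_linearlySeparable_snoc y (hy.ne_zero hV _), card_linearlySeparable_fin_zero,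
      card_linearlySeparable_fin_zero, hq]
    simp [sum_range_succ']
  | succ n ih =>
    rcases eq_or_ne (finrank ℝ V) 0 with hV | hV
    · simp [hV, card_linearlySeparable_of_finrank_eq_zero]
    obtain ⟨q, hq⟩ := Nat.exists_eq_add_one_of_ne_zero hV
    have hu := hy.ne_zero hV (Fin.last _)
    have hrank : finrank ℝ (V ⧸ ℝ ∙ y (Fin.last _)) = q := by
      have := finrank_quotient_span_singleton_add_one ℝ hu
      omega
    rw [card_linearlySeparable_snoc y hu, ih _ (hy.comp (Fin.castSucc_injective _)),
      ih _ (hy.mkQ_comp_castSucc hu), hrank, hq, sum_range_choose_succ]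
    ring

end Counting

theorem sum_range_choose_sub_eq_sum_Ico (m r : ℕ) :
    ∑ k ∈ range (m + 1 - r), m.choose k = ∑ k ∈ Ico r (m + 1), m.choose k := by
  rw [sum_Ico_eq_sum_range, ← sum_range_reflect]
  refine sum_congr rfl fun k hk => ?_
  rw [mem_range] at hk
  rw [← Nat.choose_symm (by omega)]
  congr 1
  omega

theorem sum_range_choose_add_sum_range_choose_sub (m r : ℕ) :
    ∑ k ∈ range r, m.choose k + ∑ k ∈ range (m + 1 - r), m.choose k = 2 ^ m := by
  rw [sum_range_choose_sub_eq_sum_Ico, ← Nat.sum_range_choose]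
  rcases le_total r (m + 1) with hr | hr
  · exact sum_range_add_sum_Ico _ hr
  · rw [Ico_eq_empty_of_le hr, sum_empty, add_zero]
    refine (sum_subset (range_subset_range.2 hr) fun k hk hk' => ?_).symm
    exact Nat.choose_eq_zero_of_lt (by simp only [mem_range] at hk hk'; omega)

theorem stmt10_general (n p : ℕ) (hn : 1 ≤ n) (x : Fin n → Fin p → ℝ)
    (hgen : ∀ s : Finset (Fin n), s.card ≤ p →
      LinearIndependent ℝ (fun i : s => x i)) :
    Nat.card {S : Finset (Fin n) // ∃ w : Fin p → ℝ,
        (∀ i ∈ S, 0 < ∑ j, w j * x i j) ∧ ∀ i ∉ S, (∑ j, w j * x i j) < 0}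
      = 2 * ∑ k ∈ Finset.range p, Nat.choose (n - 1) k
    ∧ 2 ^ n - 2 * ∑ k ∈ Finset.range p, Nat.choose (n - 1) k
      = 2 * ∑ k ∈ Finset.range (n - p), Nat.choose (n - 1) k := by
  obtain ⟨m, rfl⟩ := Nat.exists_eq_add_of_le' hn
  have hx : InGeneralPosition x := fun s hs => hgen s (by rwa [finrank_fin_fun] at hs)
  simp only [Nat.add_sub_cancel]
  refine ⟨?_, ?_⟩
  · classical
    rw [Nat.card_eq_fintype_card, Fintype.card_subtype]
    simp_rw [← linearlySeparable_pi_iff]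
    simpa using card_linearlySeparable m x hx
  · have := sum_range_choose_add_sum_range_choose_sub m p
    rw [pow_succ]
    omega

/-- Cover's function counting theorem (Schläfli formula): for `n` points in `ℝ^p` in general
position, the number of homogeneously linearly separable dichotomies is
`C(n,p) = 2 ∑_{k=0}^{p-1} binom(n-1,k)`, and consequently the number of non-separable
dichotomies is `2^n - C(n,p) = 2 ∑_{k=0}^{n-p-1} binom(n-1,k)`. -/
theorem stmt10 (n p : ℕ) (hp : 1 ≤ p) (hn : 1 ≤ n) (x : Fin n → Fin p → ℝ)
    (hgen : ∀ s : Finset (Fin n), s.card ≤ p →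
      LinearIndependent ℝ (fun i : s => x i)) :
    Nat.card {S : Finset (Fin n) // ∃ w : Fin p → ℝ,
        (∀ i ∈ S, 0 < ∑ j, w j * x i j) ∧ ∀ i ∉ S, (∑ j, w j * x i j) < 0}
      = 2 * ∑ k ∈ Finset.range p, Nat.choose (n - 1) k
    ∧ 2 ^ n - 2 * ∑ k ∈ Finset.range p, Nat.choose (n - 1) k
      = 2 * ∑ k ∈ Finset.range (n - p), Nat.choose (n - 1) k :=
  stmt10_general n p hn x hgen
end

section
/- Let B be a family of subsets of {1,...,n} with |B| ≤ 2 Σ_{k=0}^{m} binom(n,k) for some m ≤ n, and fix a subset T ⊆ {1,...,n}. Let S be a random subset where each element i is included independently with probability 1-q if i ∈ T and probability q if i ∉ T, where q ≤ 1/2. Then P[S ∈ B] ≤ 2 P[Bin(n, q) ≤ m]. -/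
/-!
`P[S = A]` depends only on the distance `k = |T ∆ A|` through the weight `q^k (1-q)^(n-k)`,
which is antitone in `k` because `q ≤ 1 - q`. At most `binom(n,k)` members of `B` lie at
distance `k` from `T`, so the probability is maximised, in the fractional relaxation, by
filling the distances `0, …, m` to capacity (twice over) and charging everything beyond `m`
at the weight of distance `m`.
-/

open Finset
open scoped symmDiff

lemma antitoneOn_pow_mul_pow_sub {q p : ℝ} (hq : 0 ≤ q) (hqp : q ≤ p) (n : ℕ) :
    AntitoneOn (fun k => q ^ k * p ^ (n - k)) (Set.Iic n) := by
  intro j _ k hk hjk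
  rw [Set.mem_Iic] at hk
  obtain ⟨d, rfl⟩ := Nat.exists_eq_add_of_le hjk
  have hn : n - j = n - (j + d) + d := by omega
  calc q ^ (j + d) * p ^ (n - (j + d)) = q ^ j * q ^ d * p ^ (n - (j + d)) := by rw [pow_add]
    _ ≤ q ^ j * p ^ d * p ^ (n - (j + d)) := by
        have hp : 0 ≤ p := hq.trans hqp
        gcongr
    _ = q ^ j * p ^ (n - j) := by rw [hn, pow_add]; ring

lemma sum_mul_le_of_antitoneOn {n m : ℕ} (hm : m ≤ n) {a c w : ℕ → ℝ} {t : ℝ}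
    (hw : AntitoneOn w (Set.Iic n)) (hwm : 0 ≤ w m) (ha : ∀ k, 0 ≤ a k)
    (hac : ∀ k ≤ m, a k ≤ t * c k)
    (htot : ∑ k ∈ range (n + 1), a k ≤ t * ∑ k ∈ range (m + 1), c k) :
    ∑ k ∈ range (n + 1), a k * w k ≤ t * ∑ k ∈ range (m + 1), c k * w k := by
  have hsub : range (m + 1) ⊆ range (n + 1) := range_subset_range.mpr (by omega)
  -- Measure everything relative to `w m`: the excess `w k - w m` is `≥ 0` exactly below `m`.
  have hexcess : ∑ k ∈ range (n + 1), a k * (w k - w m)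
      ≤ ∑ k ∈ range (m + 1), t * c k * (w k - w m) := by
    refine (sum_le_sum_of_subset_of_nonpos' hsub fun k hk hkm => ?_).trans
      (sum_le_sum fun k hk => ?_)
    · simp only [mem_range] at hk hkm
      exact mul_nonpos_of_nonneg_of_nonpos (ha k) <|
        sub_nonpos.mpr <| hw (Set.mem_Iic.mpr (by omega)) (Set.mem_Iic.mpr (by omega)) (by omega)
    · simp only [mem_range] at hk
      exact mul_le_mul_of_nonneg_right (hac k (by omega)) <|
        sub_nonneg.mpr <| hw (Set.mem_Iic.mpr (by omega)) (Set.mem_Iic.mpr hm) (by omega)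
  calc ∑ k ∈ range (n + 1), a k * w k
      = ∑ k ∈ range (n + 1), a k * (w k - w m) + (∑ k ∈ range (n + 1), a k) * w m := by
        rw [sum_mul, ← sum_add_distrib]; simp only [mul_sub, sub_add_cancel]
    _ ≤ ∑ k ∈ range (m + 1), t * c k * (w k - w m)
          + (t * ∑ k ∈ range (m + 1), c k) * w m := by
        gcongr
    _ = t * ∑ k ∈ range (m + 1), c k * w k := by
        rw [mul_sum, mul_sum, sum_mul, ← sum_add_distrib]; congr 1 with k; ring

section SymmDiff

variable {α : Type*} [Fintype α] [DecidableEq α]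

lemma card_filter_card_symmDiff_eq_le_choose (T : Finset α) (B : Finset (Finset α)) (k : ℕ) :
    #{A ∈ B | #(T ∆ A) = k} ≤ (Fintype.card α).choose k := by
  calc #{A ∈ B | #(T ∆ A) = k} ≤ #(powersetCard k (univ : Finset α)) :=
        card_le_card_of_injOn (T ∆ ·) (fun A hA => by simpa using (mem_filter.mp hA).2)
          (symmDiff_right_injective T).injOn
    _ = (Fintype.card α).choose k := by rw [card_powersetCard, card_univ]

lemma sum_comp_card_symmDiff_eq_sum_range {M : Type*} [AddCommMonoid M] (T : Finset α)
    (B : Finset (Finset α)) (f : ℕ → M) :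
    ∑ A ∈ B, f #(T ∆ A)
      = ∑ k ∈ range (Fintype.card α + 1), #{A ∈ B | #(T ∆ A) = k} • f k := by
  have hmaps : ∀ A ∈ B, #(T ∆ A) ∈ range (Fintype.card α + 1) := fun A _ =>
    mem_range_succ_iff.mpr (card_le_univ _)
  rw [← sum_fiberwise_of_maps_to hmaps]
  refine sum_congr rfl fun k _ => ?_
  rw [sum_congr rfl fun A hA => congrArg f (mem_filter.mp hA).2, sum_const]

end SymmDiff

/-- Let `B` be a family of subsets of `{1,…,n}` with `|B| ≤ 2 ∑_{k≤m} binom(n,k)`, and let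
`S` be a random subset including each `i ∈ T` with probability `1-q` and each `i ∉ T`
with probability `q ≤ 1/2` (so `P[S = A] = q^{|T Δ A|}(1-q)^{n-|T Δ A|}`).  Then
`P[S ∈ B] ≤ 2 P[Bin(n,q) ≤ m]`. -/
theorem stmt12 (n m : ℕ) (hm : m ≤ n) (q : ℝ) (hq0 : 0 ≤ q) (hq : q ≤ 1 / 2)
    (T : Finset (Fin n)) (B : Finset (Finset (Fin n)))
    (hB : (B.card : ℝ) ≤ 2 * ∑ k ∈ Finset.range (m + 1), (Nat.choose n k : ℝ)) :
    ∑ A ∈ B, q ^ (T ∆ A).card * (1 - q) ^ (n - (T ∆ A).card)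
      ≤ 2 * ∑ k ∈ Finset.range (m + 1),
          (Nat.choose n k : ℝ) * q ^ k * (1 - q) ^ (n - k) := by
  set a : ℕ → ℝ := fun k => (#{A ∈ B | #(T ∆ A) = k} : ℝ)
  have hcount (k : ℕ) : a k ≤ n.choose k := by
    simpa [a] using card_filter_card_symmDiff_eq_le_choose T B k
  have htot : ∑ k ∈ range (n + 1), a k = #B := by
    simpa using (sum_comp_card_symmDiff_eq_sum_range T B fun _ => (1 : ℝ)).symm
  have hweight := antitoneOn_pow_mul_pow_sub hq0 (show q ≤ 1 - q by linarith) n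
  calc ∑ A ∈ B, q ^ #(T ∆ A) * (1 - q) ^ (n - #(T ∆ A))
      = ∑ k ∈ range (n + 1), a k * (q ^ k * (1 - q) ^ (n - k)) := by
        simpa [a] using sum_comp_card_symmDiff_eq_sum_range T B fun k => q ^ k * (1 - q) ^ (n - k)
    _ ≤ 2 * ∑ k ∈ range (m + 1), (n.choose k : ℝ) * (q ^ k * (1 - q) ^ (n - k)) :=
        sum_mul_le_of_antitoneOn hm hweight
          (mul_nonneg (pow_nonneg hq0 m) (pow_nonneg (by linarith) _)) (fun k => by positivity)
          (fun k _ => (hcount k).trans (by linarith [(n.choose k).cast_nonneg (α := ℝ)]))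
          (htot ▸ hB)
    _ = _ := by simp only [mul_assoc]
end
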